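/- For σ_L, σ_R, a, b > 0 and reals m₁, m₂: N(m₁; m₂, σ_L + a + σ_R + b) · N(x; μ̄, σ̄²) = ∬ N(u; x, σ_L) N(v; x, σ_R) N(u; m₁, a) N(v; m₂, b) du dv, where σ̄² = ((σ_L + a)⁻¹ + (σ_R + b)⁻¹)⁻¹ and μ̄ = σ̄²((σ_L + a)⁻¹ m₁ + (σ_R + b)⁻¹ m₂). -/

import Mathlib

/-!
Completing the square shows that the product of two Gaussian densities in the same variable is a
constant times a third Gaussian density, the constant being the density of the difference of the
two means at the sum of the variances. Integrating out `u` and `v` separately therefore turns each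
inner factor into a Gaussian in `x` with variances `σL + a` and `σR + b`, and one more application
of the product identity, now in `x`, gives the closed form.
-/

open MeasureTheory

/-- Univariate Gaussian probability density function `N(x; μ, σ²)`. -/
noncomputable def gpdf (μ σ2 x : ℝ) : ℝ :=
  (Real.sqrt (2 * Real.pi * σ2))⁻¹ * Real.exp (-((x - μ) ^ 2) / (2 * σ2))

lemma gpdf_eq_gaussianPDFReal (μ σ2 : ℝ) (hσ : 0 ≤ σ2) :
    gpdf μ σ2 = ProbabilityTheory.gaussianPDFReal μ ⟨σ2, hσ⟩ := by
  funext x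
  simp [gpdf, ProbabilityTheory.gaussianPDFReal, neg_div, sq]
  rfl

lemma integral_gpdf (μ σ2 : ℝ) (hσ : 0 < σ2) : ∫ x, gpdf μ σ2 x = 1 := by
  rw [gpdf_eq_gaussianPDFReal μ σ2 hσ.le]
  exact ProbabilityTheory.integral_gaussianPDFReal_eq_one μ (ne_of_gt hσ)

lemma gpdf_mul_gpdf (m₁ m₂ s t : ℝ) (hs : 0 < s) (ht : 0 < t) (y : ℝ) :
    gpdf m₁ s y * gpdf m₂ t y =
      gpdf m₂ (s + t) m₁ *
        gpdf ((s⁻¹ + t⁻¹)⁻¹ * (s⁻¹ * m₁ + t⁻¹ * m₂)) ((s⁻¹ + t⁻¹)⁻¹) y := by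
  have hst : 0 < s + t := by positivity
  have harmonic : (s⁻¹ + t⁻¹)⁻¹ = s * t / (s + t) := by
    rw [inv_add_inv hs.ne' ht.ne', inv_div]
  have normalizers : (Real.sqrt (2 * Real.pi * s))⁻¹ * (Real.sqrt (2 * Real.pi * t))⁻¹ =
      (Real.sqrt (2 * Real.pi * (s + t)))⁻¹ *
        (Real.sqrt (2 * Real.pi * (s * t / (s + t))))⁻¹ := by
    rw [← mul_inv, ← mul_inv, ← Real.sqrt_mul (by positivity), ← Real.sqrt_mul (by positivity)]
    congr 2
    field_simp
  have exponents :
      -((y - m₁) ^ 2) / (2 * s) + -((y - m₂) ^ 2) / (2 * t) =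
        -((m₁ - m₂) ^ 2) / (2 * (s + t)) +
          -((y - s * t / (s + t) * (s⁻¹ * m₁ + t⁻¹ * m₂)) ^ 2) / (2 * (s * t / (s + t))) := by
    field_simp
    ring
  unfold gpdf
  rw [harmonic]
  calc _ = ((Real.sqrt (2 * Real.pi * s))⁻¹ * (Real.sqrt (2 * Real.pi * t))⁻¹) *
        Real.exp (-((y - m₁) ^ 2) / (2 * s) + -((y - m₂) ^ 2) / (2 * t)) := by
        rw [Real.exp_add]; ring
    _ = _ := by rw [normalizers, exponents, Real.exp_add]; ring

lemma integral_gpdf_mul_gpdf (x m σ a : ℝ) (hσ : 0 < σ) (ha : 0 < a) :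
    ∫ u, gpdf x σ u * gpdf m a u = gpdf m (σ + a) x := by
  simp_rw [gpdf_mul_gpdf x m σ a hσ ha, integral_const_mul]
  rw [integral_gpdf _ _ (by positivity), mul_one]

theorem gaussian_inside_recursion_closed_form
    (σL σR a b : ℝ) (hσL : 0 < σL) (hσR : 0 < σR) (ha : 0 < a) (hb : 0 < b)
    (m₁ m₂ x : ℝ) :
    gpdf m₂ (σL + a + σR + b) m₁ *
      gpdf ((((σL + a)⁻¹ + (σR + b)⁻¹)⁻¹) * ((σL + a)⁻¹ * m₁ + (σR + b)⁻¹ * m₂))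
        (((σL + a)⁻¹ + (σR + b)⁻¹)⁻¹) x =
    ∫ u : ℝ, ∫ v : ℝ,
      gpdf x σL u * gpdf x σR v * gpdf m₁ a u * gpdf m₂ b v := by
  symm
  calc (∫ u : ℝ, ∫ v : ℝ, gpdf x σL u * gpdf x σR v * gpdf m₁ a u * gpdf m₂ b v)
      = ∫ u : ℝ, (gpdf x σL u * gpdf m₁ a u) * ∫ v : ℝ, gpdf x σR v * gpdf m₂ b v := by
        congr 1 with u
        rw [← integral_const_mul]
        congr 1 with v
        ring
    _ = gpdf m₁ (σL + a) x * gpdf m₂ (σR + b) x := by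
        rw [integral_mul_const, integral_gpdf_mul_gpdf x m₁ σL a hσL ha,
          integral_gpdf_mul_gpdf x m₂ σR b hσR hb]
    _ = _ := by
        rw [gpdf_mul_gpdf m₁ m₂ _ _ (by positivity) (by positivity), ← add_assoc]
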